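/- Let u ∈ L²(ℝⁿ) with [u]_s < ∞, let ε > 0, and set A^ε := {x ∈ ℝⁿ : u(x) > ε}. Then [(u−ε)⁺]_s ≤ [u]_s, and for every nonnegative v ∈ 𝒟_s(A^ε) one has 𝓔_s((u−ε)⁺, v) ≤ 𝓔_s(u, v), where (u−ε)⁺ := max{u−ε, 0}. In other words, (−Δ)^s (u−ε)⁺ ≤ (−Δ)^s u weakly in A^ε. -/

import Mathlib

open MeasureTheory ENNReal Filter Topology

noncomputable section

/-- Euclidean space ℝⁿ. -/
abbrev Rn (n : ℕ) := EuclideanSpace ℝ (Fin n)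

/-- The first coordinate of a point of ℝⁿ (junk value `0` when `n = 0`). -/
def firstCoord {n : ℕ} (ζ : Rn n) : ℝ := if h : 0 < n then ζ ⟨0, h⟩ else 0

/-- The normalization constant `c(n,s)`. -/
def cns (n : ℕ) (s : ℝ) : ℝ :=
  (∫ ζ : Rn n, (1 - Real.cos (firstCoord ζ)) / ‖ζ‖ ^ ((n : ℝ) + 2 * s))⁻¹

/-- The square of the Gagliardo seminorm `[u]_s²`, as an extended nonnegative real. -/
def gagSq (n : ℕ) (s : ℝ) (u : Rn n → ℝ) : ℝ≥0∞ :=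
  ∫⁻ p : Rn n × Rn n,
    ENNReal.ofReal ((u p.1 - u p.2) ^ 2 / ‖p.1 - p.2‖ ^ ((n : ℝ) + 2 * s))

/-- The bilinear energy `𝓔_s(u,v)`. -/
def energy (n : ℕ) (s : ℝ) (u v : Rn n → ℝ) : ℝ :=
  (cns n s / 2) *
    ∫ p : Rn n × Rn n,
      (u p.1 - u p.2) * (v p.1 - v p.2) / ‖p.1 - p.2‖ ^ ((n : ℝ) + 2 * s)

/-- The class `𝒟_s(D)`: `L²` functions with finite Gagliardo seminorm vanishing a.e. outside `D`. -/
def Ds (n : ℕ) (s : ℝ) (D : Set (Rn n)) (w : Rn n → ℝ) : Prop :=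
  MemLp w 2 (volume : Measure (Rn n)) ∧ gagSq n s w < ⊤ ∧
    ∀ᵐ x : Rn n, x ∉ D → w x = 0

/-! The truncation `t ↦ max (t - ε) 0` is `1`-Lipschitz, which gives the seminorm bound. For the
energy, `u - (u - ε)⁺ = min u ε`, so the difference of the two energies is the energy of
`min u ε` against `v`, whose integrand `(min (u x) ε - min (u y) ε) (v x - v y)` is pointwise
nonnegative: wherever `v` is nonzero, `min u ε` attains its maximum `ε`, and `v ≥ 0`. -/

lemma max_sub_sub_mul_le {a b c d ε : ℝ} (hc : 0 ≤ c) (hd : 0 ≤ d)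
    (ha : c ≠ 0 → ε < a) (hb : d ≠ 0 → ε < b) :
    (max (a - ε) 0 - max (b - ε) 0) * (c - d) ≤ (a - b) * (c - d) := by
  have hmin : ∀ x, x - max (x - ε) 0 = min x ε := fun x => by
    rcases le_total x ε with h | h <;> simp [h]
  have key : 0 ≤ (min a ε - min b ε) * (c - d) := by
    rcases eq_or_ne c 0 with rfl | hc0 <;> rcases eq_or_ne d 0 with rfl | hd0
    · simp
    · rw [min_eq_right (hb hd0).le]; nlinarith [min_le_right a ε]
    · rw [min_eq_right (ha hc0).le]; nlinarith [min_le_right b ε]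
    · simp [min_eq_right (ha hc0).le, min_eq_right (hb hd0).le]
  rw [← sub_nonneg, ← sub_mul]
  convert key using 2
  linarith [hmin a, hmin b]

lemma cns_nonneg (n : ℕ) (s : ℝ) : 0 ≤ cns n s := by
  refine inv_nonneg.2 (integral_nonneg fun ζ => div_nonneg ?_ (by positivity))
  linarith [Real.cos_le_one (firstCoord ζ)]

lemma measurable_gagKernel (n : ℕ) (s : ℝ) :
    Measurable fun p : Rn n × Rn n => ‖p.1 - p.2‖ ^ ((n : ℝ) + 2 * s) := by
  fun_prop

section Gagliardo

variable {n : ℕ} {s : ℝ}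

lemma gagSq_le_of_abs_sub_le {u w : Rn n → ℝ} (h : ∀ x y, |w x - w y| ≤ |u x - u y|) :
    gagSq n s w ≤ gagSq n s u :=
  lintegral_mono fun p => ENNReal.ofReal_le_ofReal <|
    div_le_div_of_nonneg_right (sq_le_sq.2 (h p.1 p.2)) (by positivity)

lemma MeasureTheory.AEStronglyMeasurable.sub_comp_fst_snd {u : Rn n → ℝ}
    (hu : AEStronglyMeasurable u) :
    AEStronglyMeasurable (fun p : Rn n × Rn n => u p.1 - u p.2) :=
  hu.comp_fst.sub hu.comp_snd

lemma integrable_gagIntegrand {u : Rn n → ℝ} (hu : AEStronglyMeasurable u)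
    (hgu : gagSq n s u < ⊤) :
    Integrable fun p : Rn n × Rn n => (u p.1 - u p.2) ^ 2 / ‖p.1 - p.2‖ ^ ((n : ℝ) + 2 * s) :=
  (lintegral_ofReal_ne_top_iff_integrable
    ((hu.sub_comp_fst_snd.aemeasurable.pow_const 2).div
      (measurable_gagKernel n s).aemeasurable).aestronglyMeasurable
    (ae_of_all _ fun p => div_nonneg (sq_nonneg _) (by positivity))).1 hgu.ne

lemma integrable_energyIntegrand {u v : Rn n → ℝ} (hu : AEStronglyMeasurable u)
    (hv : AEStronglyMeasurable v) (hgu : gagSq n s u < ⊤) (hgv : gagSq n s v < ⊤) :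
    Integrable fun p : Rn n × Rn n =>
      (u p.1 - u p.2) * (v p.1 - v p.2) / ‖p.1 - p.2‖ ^ ((n : ℝ) + 2 * s) := by
  refine ((integrable_gagIntegrand hu hgu).add (integrable_gagIntegrand hv hgv)).mono'
    ((hu.sub_comp_fst_snd.aemeasurable.mul hv.sub_comp_fst_snd.aemeasurable).div
      (measurable_gagKernel n s).aemeasurable).aestronglyMeasurable (ae_of_all _ fun p => ?_)
  have hK : 0 ≤ ‖p.1 - p.2‖ ^ ((n : ℝ) + 2 * s) := by positivity
  rw [Pi.add_apply, Real.norm_eq_abs, abs_div, abs_of_nonneg hK, ← add_div, abs_mul]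
  gcongr
  nlinarith [sq_abs (u p.1 - u p.2), sq_abs (v p.1 - v p.2),
    sq_nonneg (|u p.1 - u p.2| - |v p.1 - v p.2|)]

lemma energy_le_energy_of_ae_le {u w v : Rn n → ℝ} (hu : AEStronglyMeasurable u)
    (hw : AEStronglyMeasurable w) (hv : AEStronglyMeasurable v) (hgu : gagSq n s u < ⊤)
    (hgw : gagSq n s w < ⊤) (hgv : gagSq n s v < ⊤)
    (h : ∀ᵐ p : Rn n × Rn n,
      (w p.1 - w p.2) * (v p.1 - v p.2) ≤ (u p.1 - u p.2) * (v p.1 - v p.2)) :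
    energy n s w v ≤ energy n s u v := by
  refine mul_le_mul_of_nonneg_left ?_ (div_nonneg (cns_nonneg n s) zero_le_two)
  refine integral_mono_ae (integrable_energyIntegrand hw hv hgw hgv)
    (integrable_energyIntegrand hu hv hgu hgv) ?_
  filter_upwards [h] with p hp
  exact div_le_div_of_nonneg_right hp (by positivity)

end Gagliardo

theorem stmt7_general (n : ℕ) (s : ℝ)
    (u : Rn n → ℝ) (hu : MemLp u 2 (volume : Measure (Rn n))) (hgu : gagSq n s u < ⊤)
    (ε : ℝ)
    (Aε : Set (Rn n)) (hAε : Aε = {x : Rn n | ε < u x}) :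
    gagSq n s (fun x => max (u x - ε) 0) ≤ gagSq n s u ∧
      ∀ v : Rn n → ℝ, Ds n s Aε v → (∀ᵐ x : Rn n, 0 ≤ v x) →
        energy n s (fun x => max (u x - ε) 0) v ≤ energy n s u v := by
  subst hAε
  have hgw : gagSq n s (fun x => max (u x - ε) 0) ≤ gagSq n s u :=
    gagSq_le_of_abs_sub_le fun x y => by
      simpa using abs_max_sub_max_le_abs (u x - ε) (u y - ε) 0
  refine ⟨hgw, fun v ⟨hv, hgv, hvA⟩ hv0 => ?_⟩
  have hsupp : ∀ᵐ x : Rn n, 0 ≤ v x ∧ (v x ≠ 0 → ε < u x) := by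
    filter_upwards [hv0, hvA] with x hx0 hxA
    exact ⟨hx0, fun hx => not_not.1 (mt hxA hx)⟩
  refine energy_le_energy_of_ae_le hu.1 (by have := hu.1; fun_prop) hv.1 hgu
    (hgw.trans_lt hgu) hgv ?_
  filter_upwards [Measure.quasiMeasurePreserving_fst.ae hsupp,
    Measure.quasiMeasurePreserving_snd.ae hsupp] with p ⟨hv1, hu1⟩ ⟨hv2, hu2⟩
  exact max_sub_sub_mul_le hv1 hv2 hu1 hu2

theorem stmt7 (n : ℕ) (hn : 1 ≤ n) (s : ℝ) (hs : s ∈ Set.Ioo (0:ℝ) 1)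
    (u : Rn n → ℝ) (hu : MemLp u 2 (volume : Measure (Rn n))) (hgu : gagSq n s u < ⊤)
    (ε : ℝ) (hε : 0 < ε)
    (Aε : Set (Rn n)) (hAε : Aε = {x : Rn n | ε < u x}) :
    gagSq n s (fun x => max (u x - ε) 0) ≤ gagSq n s u ∧
      ∀ v : Rn n → ℝ, Ds n s Aε v → (∀ᵐ x : Rn n, 0 ≤ v x) →
        energy n s (fun x => max (u x - ε) 0) v ≤ energy n s u v :=
  stmt7_general n s u hu hgu ε Aε hAε
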